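/- Let n ≥ 1 and let P_n denote the path graph on n vertices. Then the set of complex roots of the independence polynomial I(P_n, z) is exactly { 1/(4·cos²(kπ/(n+2))) : k = 1, 2, …, ⌈n/2⌉ }. In particular the smallest root is β(P_n) = 1/(4·cos²(π/(n+2))) and the root of second smallest absolute value is 1/(4·cos²(2π/(n+2))) (for n ≥ 3). -/

import Mathlib

open Polynomial

open scoped Classical in
/-- `indPolyOn G A` is the independence polynomial (over `ℝ`) of the subgraph of `G`
induced on the vertex set `A`: the sum of `(-1)^|s| • X^|s|` over all independent
sets `s ⊆ A` of `G`.  Equivalently it is `∑ k (-1)^k a_k z^k` where `a_k` is the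
number of independent sets of size `k` of the induced subgraph `G[A]`. -/
noncomputable def indPolyOn {V : Type*} [Fintype V] (G : SimpleGraph V) (A : Set V) :
    Polynomial ℝ :=
  ∑ s ∈ Finset.univ.filter
      (fun s : Finset V => ↑s ⊆ A ∧ ∀ u ∈ s, ∀ v ∈ s, ¬ G.Adj u v),
    ((-1 : ℝ) ^ s.card) • (X : Polynomial ℝ) ^ s.card

/-- The independence polynomial `I(G,z)` of `G`. -/
noncomputable def indPoly {V : Type*} [Fintype V] (G : SimpleGraph V) : Polynomial ℝ :=
  indPolyOn G Set.univ

/-! Deleting the last vertex of a path gives `I(P_{m+1}) = I(P_m) - z I(P_{m-1})`, the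
three-term recurrence of the Chebyshev polynomials of the second kind; precisely,
`(2c)^(n+1) I(P_n, 1/(4c²)) = U_{n+1}(c)`. Since `U_{n+1}(cos θ) sin θ = sin((n+2)θ)`,
every angle `θ = kπ/(n+2)` with `1 ≤ k ≤ ⌈n/2⌉` yields a root `1/(4cos²θ)`. These roots
increase strictly with `k`, and there are `⌈n/2⌉ ≥ deg I(P_n)` of them, so they are all the
roots. -/

open SimpleGraph

section

variable {V : Type*} [Fintype V] (G : SimpleGraph V)

open scoped Classical in
noncomputable def indepSetsOn (A : Set V) : Finset (Finset V) :=
  Finset.univ.filter fun s : Finset V => ↑s ⊆ A ∧ ∀ u ∈ s, ∀ v ∈ s, ¬ G.Adj u v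

variable {G}

theorem mem_indepSetsOn {A : Set V} {s : Finset V} :
    s ∈ indepSetsOn G A ↔ ↑s ⊆ A ∧ ∀ u ∈ s, ∀ v ∈ s, ¬ G.Adj u v := by
  simp [indepSetsOn]

theorem indPolyOn_eq_sum_indepSetsOn (A : Set V) :
    indPolyOn G A = ∑ s ∈ indepSetsOn G A, ((-1 : ℝ) ^ s.card) • (X : ℝ[X]) ^ s.card :=
  rfl

variable (G) in
theorem indepSetsOn_empty : indepSetsOn G ∅ = {∅} := by
  ext s
  simp +contextual [mem_indepSetsOn, Set.subset_empty_iff]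

theorem filter_notMem_indepSetsOn [DecidableEq V] (A : Set V) (a : V) :
    (indepSetsOn G A).filter (a ∉ ·) = indepSetsOn G (A \ {a}) := by
  ext s
  simp [mem_indepSetsOn, Set.subset_sdiff, and_right_comm]

theorem sum_filter_mem_indepSetsOn [DecidableEq V] {M : Type*} [AddCommMonoid M] {A : Set V}
    {a : V} (ha : a ∈ A) (g : ℕ → M) :
    ∑ s ∈ (indepSetsOn G A).filter (a ∈ ·), g s.card =
      ∑ t ∈ indepSetsOn G (A \ insert a (G.neighborSet a)), g (t.card + 1) := by
  refine Finset.sum_nbij' (·.erase a) (insert a) ?_ ?_ ?_ ?_ ?_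
  · intro s hs
    simp only [Finset.mem_filter, mem_indepSetsOn] at hs ⊢
    obtain ⟨⟨hsA, hs⟩, has⟩ := hs
    refine ⟨fun v hv => ?_, fun u hu v hv => ?_⟩
    · obtain ⟨hva, hv⟩ := Finset.mem_erase.mp hv
      exact ⟨hsA hv, by simpa [hva] using hs a has v hv⟩
    · exact hs u (Finset.mem_of_mem_erase hu) v (Finset.mem_of_mem_erase hv)
  · intro s hs
    simp only [Finset.mem_filter, mem_indepSetsOn] at hs ⊢
    obtain ⟨hsA, hs⟩ := hs
    refine ⟨⟨?_, ?_⟩, Finset.mem_insert_self a s⟩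
    · rw [Finset.coe_insert]
      exact Set.insert_subset ha (hsA.trans Set.sdiff_subset)
    · have hna : ∀ v ∈ s, ¬ G.Adj a v := fun v hv hav => (hsA hv).2 (Or.inr hav)
      rintro u hu v hv
      rw [Finset.mem_insert] at hu hv
      rcases hu with rfl | hu <;> rcases hv with rfl | hv
      exacts [G.irrefl, hna v hv, fun h => hna u hu h.symm, hs u hu v hv]
  · intro s hs
    exact Finset.insert_erase (Finset.mem_filter.mp hs).2
  · intro s hs
    exact Finset.erase_insert fun has => (mem_indepSetsOn.mp hs).1 has |>.2 (Or.inl rfl)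
  · intro s hs
    rw [Finset.card_erase_of_mem (Finset.mem_filter.mp hs).2,
      Nat.sub_add_cancel (Finset.card_pos.mpr ⟨a, (Finset.mem_filter.mp hs).2⟩)]

/-- An independent set of `A` either avoids `a`, or consists of `a` and an independent set of `A`
avoiding the closed neighbourhood of `a`. -/
theorem indPolyOn_eq_sub_X_mul {A : Set V} {a : V} (ha : a ∈ A) :
    indPolyOn G A =
      indPolyOn G (A \ {a}) - X * indPolyOn G (A \ insert a (G.neighborSet a)) := by
  classical
  rw [indPolyOn_eq_sum_indepSetsOn, ← Finset.sum_filter_not_add_sum_filter _ (a ∈ ·),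
    filter_notMem_indepSetsOn, sum_filter_mem_indepSetsOn ha (fun k => (-1 : ℝ) ^ k • X ^ k),
    indPolyOn_eq_sum_indepSetsOn, indPolyOn_eq_sum_indepSetsOn, Finset.mul_sum, sub_eq_add_neg,
    ← Finset.sum_neg_distrib]
  congr 1
  refine Finset.sum_congr rfl fun t _ => ?_
  simp only [pow_succ, smul_eq_C_mul, map_mul, map_neg, map_one]
  ring

end

-- At `m = 0` the truncated `m - 1 = 0` gives the empty prefix, which is what the recurrence needs.
theorem indPolyOn_pathGraph_lt_succ {n m : ℕ} (hm : m < n) :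
    indPolyOn (pathGraph n) {v | v.val < m + 1} =
      indPolyOn (pathGraph n) {v | v.val < m} -
        X * indPolyOn (pathGraph n) {v | v.val < m - 1} := by
  have hmem : (⟨m, hm⟩ : Fin n) ∈ {v : Fin n | v.val < m + 1} := Nat.lt_succ_self m
  rw [indPolyOn_eq_sub_X_mul hmem]
  congr 3 <;> ext v <;> simp only [Order.lt_add_one_iff, Set.mem_sdiff, Set.mem_ofPred_eq,
    Set.mem_singleton_iff, Set.mem_insert_iff, Fin.ext_iff, mem_neighborSet, pathGraph_adj,
    not_or] <;> omega

noncomputable def pathIndPoly : ℕ → ℝ[X]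
  | 0 => 1
  | 1 => 1 - X
  | n + 2 => pathIndPoly (n + 1) - X * pathIndPoly n

theorem indPolyOn_pathGraph_lt {n m : ℕ} (hm : m ≤ n) :
    indPolyOn (pathGraph n) {v | v.val < m} = pathIndPoly m := by
  induction m using Nat.strong_induction_on with
  | _ m ih =>
    match m with
    | 0 => simp [indPolyOn_eq_sum_indepSetsOn, indepSetsOn_empty, pathIndPoly]
    | 1 => rw [indPolyOn_pathGraph_lt_succ hm, ih 0 (by omega) (by omega)]; simp [pathIndPoly]
    | m + 2 =>
      rw [indPolyOn_pathGraph_lt_succ hm, ih (m + 1) (by omega) (by omega), Nat.add_sub_cancel,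
        ih m (by omega) (by omega)]
      rfl

theorem indPoly_pathGraph (n : ℕ) : indPoly (pathGraph n) = pathIndPoly n := by
  rw [indPoly, ← indPolyOn_pathGraph_lt le_rfl]
  congr
  ext v
  simp

theorem pathIndPoly_eval_zero (n : ℕ) : (pathIndPoly n).eval 0 = 1 := by
  induction n using Nat.twoStepInduction with
  | zero => simp [pathIndPoly]
  | one => simp [pathIndPoly]
  | more n _ ih => simp [pathIndPoly, ih]

theorem pathIndPoly_ne_zero (n : ℕ) : pathIndPoly n ≠ 0 := fun h => by
  simpa [h] using pathIndPoly_eval_zero n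

theorem natDegree_pathIndPoly_le (n : ℕ) : (pathIndPoly n).natDegree ≤ (n + 1) / 2 := by
  induction n using Nat.twoStepInduction with
  | zero => simp [pathIndPoly]
  | one => simp only [pathIndPoly]; compute_degree!
  | more n ih₀ ih₁ =>
    refine (natDegree_sub_le _ _).trans (max_le (ih₁.trans (by omega)) ?_)
    exact natDegree_mul_le.trans (by rw [natDegree_X]; omega)

open Polynomial.Chebyshev in
theorem pathIndPoly_eval_eq_U {x c : ℝ} (hx : 4 * c ^ 2 * x = 1) (n : ℕ) :
    (2 * c) ^ (n + 1) * (pathIndPoly n).eval x = (U ℝ (n + 1)).eval c := by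
  induction n using Nat.twoStepInduction with
  | zero => simp [pathIndPoly]
  | one =>
    simp only [pathIndPoly, eval_sub, eval_one, eval_X, Nat.cast_one, one_add_one_eq_two, U_two,
      eval_mul, eval_pow, eval_ofNat]
    linear_combination -hx
  | more n ih₀ ih₁ =>
    have hU := U_add_two ℝ ((n : ℤ) + 1)
    push_cast at ih₁ ⊢
    rw [show (n : ℤ) + 2 + 1 = (n : ℤ) + 1 + 2 by ring, hU]
    simp only [pathIndPoly, eval_sub, eval_mul, eval_X, eval_ofNat] at ih₁ ⊢
    linear_combination (2 * c) * ih₁ - ih₀ - (2 * c) ^ (n + 1) * (pathIndPoly n).eval x * hx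

open Real

theorem sin_mul_pathIndPoly_eval {θ : ℝ} (hcos : cos θ ≠ 0) (n : ℕ) :
    sin θ * (2 * cos θ) ^ (n + 1) * (pathIndPoly n).eval (1 / (4 * cos θ ^ 2)) =
      sin ((n + 2) * θ) := by
  have hx : 4 * cos θ ^ 2 * (1 / (4 * cos θ ^ 2)) = 1 := by field_simp
  rw [mul_assoc, pathIndPoly_eval_eq_U hx, mul_comm, Polynomial.Chebyshev.U_real_cos]
  push_cast
  ring_nf

noncomputable def pathRoot (n k : ℕ) : ℝ := 1 / (4 * cos (k * π / (n + 2)) ^ 2)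

theorem pathAngle_mem_Ico {n k : ℕ} (hk : 2 * k ≤ n + 1) :
    k * π / (n + 2) ∈ Set.Ico 0 (π / 2) := by
  have hk' : (2 * k : ℝ) < n + 2 := by exact_mod_cast (by omega : 2 * k < n + 2)
  refine ⟨by positivity, ?_⟩
  rw [div_lt_div_iff₀ (by positivity) two_pos]
  nlinarith [pi_pos]

theorem pathIndPoly_isRoot_pathRoot {n k : ℕ} (hk₁ : 1 ≤ k) (hk₂ : 2 * k ≤ n + 1) :
    (pathIndPoly n).IsRoot (pathRoot n k) := by
  obtain ⟨-, hθ⟩ := pathAngle_mem_Ico hk₂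
  have hθ₀ : 0 < k * π / (n + 2) :=
    div_pos (mul_pos (by exact_mod_cast hk₁) pi_pos) (by positivity)
  have hcos : 0 < cos (k * π / (n + 2)) := cos_pos_of_mem_Ioo ⟨by linarith, hθ⟩
  have hsin : 0 < sin (k * π / (n + 2)) := sin_pos_of_pos_of_lt_pi hθ₀ (by linarith)
  have h := sin_mul_pathIndPoly_eval hcos.ne' n
  rw [mul_div_cancel₀ _ (by positivity : (n : ℝ) + 2 ≠ 0), sin_nat_mul_pi] at h
  simpa [pathRoot, hsin.ne', hcos.ne'] using h

theorem strictMonoOn_one_div_four_mul_cos_sq :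
    StrictMonoOn (fun θ => 1 / (4 * cos θ ^ 2)) (Set.Ico 0 (π / 2)) := by
  intro a ha b hb hab
  have hcos : cos b < cos a :=
    strictAntiOn_cos ⟨ha.1, by linarith [ha.2, pi_pos]⟩ ⟨hb.1, by linarith [hb.2, pi_pos]⟩
      hab
  have hb' : 0 < cos b := cos_pos_of_mem_Ioo ⟨by linarith [hb.1, pi_pos], hb.2⟩
  have : 0 < 4 * cos b ^ 2 := by positivity
  show 1 / (4 * cos a ^ 2) < 1 / (4 * cos b ^ 2)
  gcongr

theorem strictMonoOn_pathRoot (n : ℕ) : StrictMonoOn (pathRoot n) {k | 2 * k ≤ n + 1} := by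
  intro k hk l hl hkl
  refine strictMonoOn_one_div_four_mul_cos_sq (pathAngle_mem_Ico hk) (pathAngle_mem_Ico hl) ?_
  gcongr

theorem Polynomial.setOf_isRoot_eq_of_natDegree_le_card {R : Type*} [CommRing R] [IsDomain R]
    {p : R[X]} (hp : p ≠ 0) {s : Finset R} (hs : ∀ x ∈ s, p.IsRoot x)
    (hdeg : p.natDegree ≤ s.card) : {x | p.IsRoot x} = s := by
  have hroots : s.val = p.roots :=
    Multiset.eq_of_le_of_card_le ((Multiset.le_iff_subset s.nodup).2 fun x hx =>
      (mem_roots hp).2 (hs x hx)) ((card_roots' p).trans hdeg)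
  ext x
  rw [Set.mem_ofPred_eq, Finset.mem_coe, ← Finset.mem_val, hroots, mem_roots hp]

theorem setOf_aeval_pathIndPoly_eq (n : ℕ) :
    {z : ℂ | aeval z (pathIndPoly n) = 0} =
      (fun k => (pathRoot n k : ℂ)) '' {k | 1 ≤ k ∧ k ≤ (n + 1) / 2} := by
  have hinj : Set.InjOn (fun k => (pathRoot n k : ℂ)) (Finset.Icc 1 ((n + 1) / 2)) :=
    fun k hk l hl hkl => (strictMonoOn_pathRoot n).injOn
      (show 2 * k ≤ n + 1 by have := (Finset.mem_Icc.mp hk).2; omega)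
      (show 2 * l ≤ n + 1 by have := (Finset.mem_Icc.mp hl).2; omega)
      (Complex.ofReal_injective hkl)
  have h := setOf_isRoot_eq_of_natDegree_le_card
    (p := (pathIndPoly n).map (algebraMap ℝ ℂ))
    (s := (Finset.Icc 1 ((n + 1) / 2)).image fun k => (pathRoot n k : ℂ))
    ((Polynomial.map_ne_zero_iff (algebraMap ℝ ℂ).injective).2 (pathIndPoly_ne_zero n))
    (by
      simp only [Finset.mem_image, Finset.mem_Icc]
      rintro _ ⟨k, hk, rfl⟩
      rw [IsRoot.def, eval_map_algebraMap, ← Complex.coe_algebraMap,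
        aeval_algebraMap_apply_eq_algebraMap_eval,
        (pathIndPoly_isRoot_pathRoot hk.1 (by omega)).eq_zero, map_zero])
    (by
      rw [natDegree_map_eq_of_injective (algebraMap ℝ ℂ).injective,
        Finset.card_image_of_injOn hinj, Nat.card_Icc, Nat.add_sub_cancel]
      exact natDegree_pathIndPoly_le n)
  simp only [IsRoot.def, eval_map_algebraMap] at h
  rw [h, Finset.coe_image, Finset.coe_Icc]
  rfl

/-- For `n ≥ 1`, the set of complex roots of the independence
polynomial of the path graph `P_n` is exactly
`{1/(4cos²(kπ/(n+2))) : 1 ≤ k ≤ ⌈n/2⌉}`.  In particular the smallest root is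
`β(P_n) = 1/(4cos²(π/(n+2)))`, and for `n ≥ 3` the root of second smallest absolute
value is `1/(4cos²(2π/(n+2)))`. -/
theorem indPoly_pathGraph_roots (n : ℕ) (hn : 1 ≤ n) :
    ({z : ℂ | aeval z (indPoly (SimpleGraph.pathGraph n)) = 0} =
      (fun k : ℕ =>
          ((1 / (4 * Real.cos (k * Real.pi / (n + 2)) ^ 2) : ℝ) : ℂ)) ''
        {k : ℕ | 1 ≤ k ∧ k ≤ (n + 1) / 2}) ∧
    ((indPoly (SimpleGraph.pathGraph n)).eval
        (1 / (4 * Real.cos (Real.pi / (n + 2)) ^ 2)) = 0 ∧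
      ∀ x : ℝ, (indPoly (SimpleGraph.pathGraph n)).eval x = 0 →
        1 / (4 * Real.cos (Real.pi / (n + 2)) ^ 2) ≤ x) ∧
    (3 ≤ n →
      (indPoly (SimpleGraph.pathGraph n)).eval
          (1 / (4 * Real.cos (2 * Real.pi / (n + 2)) ^ 2)) = 0 ∧
      ∀ z : ℂ, aeval z (indPoly (SimpleGraph.pathGraph n)) = 0 →
        z ≠ ((1 / (4 * Real.cos (Real.pi / (n + 2)) ^ 2) : ℝ) : ℂ) →
        1 / (4 * Real.cos (2 * Real.pi / (n + 2)) ^ 2) ≤ ‖z‖) := by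
  have hroot₁ : pathRoot n 1 = 1 / (4 * cos (π / (n + 2)) ^ 2) := by simp [pathRoot]
  have hroot₂ : pathRoot n 2 = 1 / (4 * cos (2 * π / (n + 2)) ^ 2) := by simp [pathRoot]
  have hroots := setOf_aeval_pathIndPoly_eq n
  have mem_roots (z : ℂ) (hz : aeval z (pathIndPoly n) = 0) :
      ∃ k, (1 ≤ k ∧ k ≤ (n + 1) / 2) ∧ (pathRoot n k : ℂ) = z := by
    have hz' : z ∈ {z : ℂ | aeval z (pathIndPoly n) = 0} := hz
    rwa [hroots] at hz'
  have mono := (strictMonoOn_pathRoot n).monotoneOn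
  rw [indPoly_pathGraph, ← hroot₁, ← hroot₂]
  refine ⟨hroots, ⟨pathIndPoly_isRoot_pathRoot le_rfl (by omega), fun x hx => ?_⟩,
    fun hn₃ => ⟨pathIndPoly_isRoot_pathRoot (by omega) (by omega), fun z hz hz₁ => ?_⟩⟩
  · obtain ⟨k, ⟨hk₁, hk₂⟩, hk⟩ := mem_roots x (by
      rw [← Complex.coe_algebraMap, aeval_algebraMap_apply_eq_algebraMap_eval, hx, map_zero])
    rw [← Complex.ofReal_inj.mp hk]
    exact mono (show 2 * 1 ≤ n + 1 by omega) (show 2 * k ≤ n + 1 by omega) hk₁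
  · obtain ⟨k, ⟨hk₁, hk₂⟩, rfl⟩ := mem_roots z hz
    have hk : 2 ≤ k := by
      by_contra! h
      exact hz₁ (by rw [show k = 1 by omega])
    rw [Complex.norm_of_nonneg (by unfold pathRoot; positivity)]
    exact mono (show 2 * 2 ≤ n + 1 by omega) (show 2 * k ≤ n + 1 by omega) hk
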